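/- arXiv:2003.08406 — 2 statements merged into one kernel-verified Lean document; each statement's English description precedes it below -/
import Mathlib

section
/- Let Z, V be subspaces of a finite-dimensional inner product space H, and let μ > 0. If the overlap of V onto Z is at least μ, then setting Y = P_V(Z) (the image of Z under the orthogonal projection onto V), the overlap of Y onto Z is at least μ and the overlap of Z onto Y is at least μ. -/
noncomputable section
open scoped Classical

open ContinuousLinearMap

variable {H : Type} [NormedAddCommGroup H] [InnerProductSpace ℂ H] [FiniteDimensional ℂ H]

/-- The orthogonal projection onto the subspace `V`, as an endomorphism of `H`. -/
def Pj (V : Submodule ℂ H) : H →L[ℂ] H := V.subtypeL.comp (V.orthogonalProjectionOnto)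

/-- The overlap `μ(V → Z)` of `V` onto `Z`: the minimum of `⟨z, P_V z⟩` over unit
vectors `z ∈ Z` (by convention `1` if `Z = 0`). -/
def ovl (V Z : Submodule ℂ H) : ℝ :=
  if Z = ⊥ then 1
  else sInf {x : ℝ | ∃ z ∈ Z, ‖z‖ = 1 ∧ x = ((inner ℂ z (Pj V z) : ℂ)).re}

/-- `V` covers `Z`: the orthogonal projection onto `Z` maps `V` onto all of `Z`. -/
def Covers (V Z : Submodule ℂ H) : Prop := Submodule.map (Pj Z : H →ₗ[ℂ] H) V = Z

/-- The error ratio `Δ = δ/μ = tan²θ` of `V` onto `Z`. -/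
def errRatio (V Z : Submodule ℂ H) : ℝ := (1 - ovl V Z) / ovl V Z

/-- A `σ`-AGSP for target space `Z`: commutes with `P_Z`, is a dilation on `Z`
(`P_Z K† K P_Z ≥ P_Z`), and satisfies `‖K P_{Z⊥}‖ ≤ √σ`. -/
def IsAGSP (σ : ℝ) (K : H →L[ℂ] H) (Z : Submodule ℂ H) : Prop :=
  K.comp (Pj Z) = (Pj Z).comp K ∧
  ((Pj Z).comp ((adjoint K).comp (K.comp (Pj Z))) - Pj Z).IsPositive ∧
  ‖K.comp (Pj Zᗮ)‖ ≤ Real.sqrt σ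

lemma Pj_mem (V : Submodule ℂ H) (x : H) : Pj V x ∈ V := (V.orthogonalProjectionOnto x).2

lemma inner_Pj_self (V : Submodule ℂ H) (x : H) :
    (inner ℂ x (Pj V x) : ℂ) = ((‖Pj V x‖^2 : ℝ) : ℂ) := by
  have h0 : (inner ℂ (x - Pj V x) (Pj V x) : ℂ) =
      0 := Submodule.starProjection_inner_eq_zero x (Pj V x) (Pj_mem V x)
  have h1 : (inner ℂ x (Pj V x) : ℂ)
      = inner ℂ (x - Pj V x) (Pj V x) + inner ℂ (Pj V x) (Pj V x) := by
    rw [← inner_add_left, sub_add_cancel]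
  rw [h1, h0, zero_add, inner_self_eq_norm_sq_to_K]
  norm_cast

lemma re_inner_Pj_self (V : Submodule ℂ H) (x : H) :
    ((inner ℂ x (Pj V x) : ℂ)).re = ‖Pj V x‖^2 := by
  rw [inner_Pj_self, Complex.ofReal_re]

lemma inner_Pj_eq (V : Submodule ℂ H) (x y : H) (hy : y ∈ V) :
    (inner ℂ y x : ℂ) = inner ℂ y (Pj V x) := by
  have h0 : (inner ℂ (x - Pj V x) y : ℂ) = 0 :=
    Submodule.starProjection_inner_eq_zero x y hy
  have h0' : (inner ℂ y (x - Pj V x) : ℂ) = 0 := by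
    rw [← inner_conj_symm, h0, map_zero]
  have h2 : (inner ℂ y x : ℂ) - inner ℂ y (Pj V x) = 0 := by
    rw [← inner_sub_right, h0']
  exact sub_eq_zero.mp h2

lemma ovl_bddBelow (V Z : Submodule ℂ H) :
    BddBelow {x : ℝ | ∃ z ∈ Z, ‖z‖ = 1 ∧ x = ((inner ℂ z (Pj V z) : ℂ)).re} := by
  refine ⟨0, ?_⟩
  rintro x ⟨z, _, _, rfl⟩
  rw [re_inner_Pj_self]
  positivity

/-- Key consequence of the overlap bound. -/
lemma key_ovl (V Z : Submodule ℂ H) {μ : ℝ} (h : μ ≤ ovl V Z)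
    (z : H) (hz : z ∈ Z) : μ * ‖z‖^2 ≤ ‖Pj V z‖^2 := by
  by_cases hz0 : z = 0
  · simp [hz0]
  have hzn : (0:ℝ) < ‖z‖ := norm_pos_iff.mpr hz0
  have hZ : Z ≠ ⊥ := by
    intro hb; exact hz0 (Submodule.mem_bot ℂ |>.mp (hb ▸ hz))
  set u : H := (‖z‖:ℂ)⁻¹ • z with hu
  have hun : ‖u‖ = 1 := by
    rw [hu, norm_smul]
    simp [norm_inv, hzn.ne']
  have huZ : u ∈ Z := Z.smul_mem _ hz
  have hmem : ((inner ℂ u (Pj V u) : ℂ)).re ∈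
      {x : ℝ | ∃ z ∈ Z, ‖z‖ = 1 ∧ x = ((inner ℂ z (Pj V z) : ℂ)).re} :=
    ⟨u, huZ, hun, rfl⟩
  have hle : ovl V Z ≤ ((inner ℂ u (Pj V u) : ℂ)).re := by
    rw [ovl, if_neg hZ]
    exact csInf_le (ovl_bddBelow V Z) hmem
  have hval : ((inner ℂ u (Pj V u) : ℂ)).re = (‖z‖⁻¹)^2 * ‖Pj V z‖^2 := by
    rw [re_inner_Pj_self, hu, map_smul, norm_smul]
    simp [mul_pow]
  have : μ ≤ (‖z‖⁻¹)^2 * ‖Pj V z‖^2 := by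
    calc μ ≤ ovl V Z := h
    _ ≤ _ := hle
    _ = _ := hval
  have h2 : μ * ‖z‖^2 ≤ (‖z‖⁻¹)^2 * ‖Pj V z‖^2 * ‖z‖^2 := by
    nlinarith
  calc μ * ‖z‖^2 ≤ (‖z‖⁻¹)^2 * ‖Pj V z‖^2 * ‖z‖^2 := h2
  _ = ‖Pj V z‖^2 := by field_simp

lemma Pj_norm_le (V : Submodule ℂ H) (x : H) : ‖Pj V x‖ ≤ ‖x‖ := by
  have := (V.orthogonalProjectionOnto).le_opNorm x
  calc ‖Pj V x‖ = ‖V.orthogonalProjectionOnto x‖ := rfl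
  _ ≤ ‖V.orthogonalProjectionOnto‖ * ‖x‖ := this
  _ ≤ 1 * ‖x‖ := by
      gcongr; exact Submodule.orthogonalProjectionOnto_norm_le V
  _ = ‖x‖ := one_mul _

lemma mu_le_one (V Z : Submodule ℂ H) {μ : ℝ} (h : μ ≤ ovl V Z) : μ ≤ 1 := by
  by_cases hZ : Z = ⊥
  · rw [ovl, if_pos hZ] at h; exact h
  · obtain ⟨z, hz, hz0⟩ := Submodule.exists_mem_ne_zero_of_ne_bot hZ
    have hk := key_ovl V Z h z hz
    have hn := Pj_norm_le V z
    have hzn : (0:ℝ) < ‖z‖ := norm_pos_iff.mpr hz0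
    have h2 : ‖Pj V z‖^2 ≤ ‖z‖^2 := by nlinarith [norm_nonneg (Pj V z)]
    nlinarith [mul_pos hzn hzn]

/-- If `V` is `μ`-overlapping onto `Z`, then `Y = P_V(Z)` and `Z` are mutually
`μ`-overlapping. -/
theorem proj_mutually_overlapping (Z V : Submodule ℂ H) (μ : ℝ) (hμ : 0 < μ)
    (h : μ ≤ ovl V Z) :
    μ ≤ ovl (Submodule.map (Pj V : H →ₗ[ℂ] H) Z) Z ∧ μ ≤ ovl Z (Submodule.map (Pj V : H →ₗ[ℂ] H) Z) := by
  set Y := Submodule.map (Pj V : H →ₗ[ℂ] H) Z with hY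
  constructor
  · -- μ ≤ ovl Y Z
    rw [ovl]
    split_ifs with hZ
    · exact mu_le_one V Z h
    · obtain ⟨z0, hz0, hz00⟩ := Submodule.exists_mem_ne_zero_of_ne_bot hZ
      have hz0n : (0:ℝ) < ‖z0‖ := norm_pos_iff.mpr hz00
      refine le_csInf ⟨_, (‖z0‖:ℂ)⁻¹ • z0, Z.smul_mem _ hz0, by
        rw [norm_smul]; simp [norm_inv, hz0n.ne'], rfl⟩ ?_
      rintro x ⟨z, hz, hzn, rfl⟩
      rw [re_inner_Pj_self]
      -- μ ≤ ‖Pj V z‖² ≤ ‖Pj Y z‖²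
      have h1 : μ ≤ ‖Pj V z‖^2 := by
        have := key_ovl V Z h z hz
        rwa [hzn, one_pow, mul_one] at this
      have hyY : Pj V z ∈ Y := Submodule.mem_map_of_mem hz
      -- ⟪Pj V z, z⟫ = ‖Pj V z‖²  and  ⟪Pj V z, z⟫ = ⟪Pj V z, Pj Y z⟫
      have e1 : (inner ℂ (Pj V z) z : ℂ) = ((‖Pj V z‖^2 : ℝ) : ℂ) := by
        rw [← inner_conj_symm, inner_Pj_self]
        simp
      have e2 : (inner ℂ (Pj V z) z : ℂ) = inner ℂ (Pj V z) (Pj Y z) :=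
        inner_Pj_eq Y z (Pj V z) hyY
      have cs : ‖(inner ℂ (Pj V z) (Pj Y z) : ℂ)‖ ≤ ‖Pj V z‖ * ‖Pj Y z‖ :=
        norm_inner_le_norm _ _
      rw [← e2, e1] at cs
      have cs' : ‖Pj V z‖^2 ≤ ‖Pj V z‖ * ‖Pj Y z‖ := by
        calc ‖Pj V z‖^2 = ‖((‖Pj V z‖^2 : ℝ) : ℂ)‖ := by
              simp [Complex.norm_real]
        _ ≤ _ := cs
      nlinarith [norm_nonneg (Pj V z), norm_nonneg (Pj Y z)]
  · -- μ ≤ ovl Z Y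
    rw [ovl]
    split_ifs with hYb
    · exact mu_le_one V Z h
    · obtain ⟨y0, hy0, hy00⟩ := Submodule.exists_mem_ne_zero_of_ne_bot hYb
      have hy0n : (0:ℝ) < ‖y0‖ := norm_pos_iff.mpr hy00
      refine le_csInf ⟨_, (‖y0‖:ℂ)⁻¹ • y0, Y.smul_mem _ hy0, by
        rw [norm_smul]; simp [norm_inv, hy0n.ne'], rfl⟩ ?_
      rintro x ⟨y, hy, hyn, rfl⟩
      rw [re_inner_Pj_self]
      obtain ⟨z, hz, hzy⟩ := hy
      replace hzy : Pj V z = y := hzy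
      have hz0 : z ≠ 0 := by
        rintro rfl
        simp only [map_zero] at hzy
        rw [← hzy] at hyn; simp at hyn
      have hzn : (0:ℝ) < ‖z‖ := norm_pos_iff.mpr hz0
      have hk : μ * ‖z‖^2 ≤ 1 := by
        have := key_ovl V Z h z hz
        rwa [hzy, hyn, one_pow] at this
      -- ⟪z, y⟫ = ‖y‖² = 1 and ⟪z, y⟫ = ⟪z, Pj Z y⟫
      have e1 : (inner ℂ z y : ℂ) = ((‖y‖^2 : ℝ) : ℂ) := by
        rw [← hzy, inner_Pj_self]
      have e2 : (inner ℂ z y : ℂ) = inner ℂ z (Pj Z y) :=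
        inner_Pj_eq Z y z hz
      have cs : ‖(inner ℂ z (Pj Z y) : ℂ)‖ ≤ ‖z‖ * ‖Pj Z y‖ :=
        norm_inner_le_norm _ _
      rw [← e2, e1, hyn] at cs
      have cs' : (1:ℝ) ≤ ‖z‖ * ‖Pj Z y‖ := by
        calc (1:ℝ) = ‖(((1:ℝ)^2 : ℝ) : ℂ)‖ := by simp
        _ ≤ _ := cs
      have h3 : (1:ℝ) ≤ ‖z‖^2 * ‖Pj Z y‖^2 := by nlinarith [norm_nonneg (Pj Z y)]
      have a1 : 0 ≤ ‖Pj Z y‖^2 * (1 - μ * ‖z‖^2) := mul_nonneg (sq_nonneg _) (by linarith)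
      have a2 : 0 ≤ μ * (‖z‖^2 * ‖Pj Z y‖^2 - 1) := mul_nonneg hμ.le (by linarith)
      nlinarith [a1, a2]
end
end

section
/- Let Z, V be subspaces of a finite-dimensional Hilbert space H such that the overlap of V onto Z is at least μ > 0. Then the lifting operator L = M†(MM†)⁻¹ : Z → V, where M : V → Z is the orthogonal projection onto Z restricted to V, is well defined and satisfies: (1) P_Z(L z) = z for all z ∈ Z, and (2) the operator norm ‖L‖ ≤ μ^{−1/2}. -/
noncomputable section
open scoped Classical

open ContinuousLinearMap

variable {H : Type} [NormedAddCommGroup H] [InnerProductSpace ℂ H] [FiniteDimensional ℂ H]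

/-- The transition map `M : V → Z`, the orthogonal projection onto `Z` restricted to `V`. -/
def Mmap (V Z : Submodule ℂ H) : V →L[ℂ] Z := (Z.orthogonalProjectionOnto).comp V.subtypeL

/-- The lifting operator `L = M†(M M†)⁻¹ : Z → V`. -/
def liftOp (V Z : Submodule ℂ H) : Z →L[ℂ] V :=
  (adjoint (Mmap V Z)).comp (Ring.inverse ((Mmap V Z).comp (adjoint (Mmap V Z))))

lemma adjoint_Mmap (V Z : Submodule ℂ H) :
    adjoint (Mmap V Z) = (Submodule.orthogonalProjectionOnto V).comp Z.subtypeL := by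
  symm
  rw [ContinuousLinearMap.eq_adjoint_iff]
  intro z v
  simp [Mmap]

lemma inner_T (V Z : Submodule ℂ H) (z : Z) :
    (inner ℂ z (((Mmap V Z).comp (adjoint (Mmap V Z))) z) : ℂ).re
      = ‖((Submodule.orthogonalProjectionOnto V (z : H) : V) : H)‖ ^ 2 := by
  have h : (inner ℂ z (((Mmap V Z).comp (adjoint (Mmap V Z))) z) : ℂ)
      = inner ℂ (adjoint (Mmap V Z) z) (adjoint (Mmap V Z) z) := by
    rw [ContinuousLinearMap.comp_apply, ← ContinuousLinearMap.adjoint_inner_left]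
  rw [h, adjoint_Mmap]
  have := inner_self_eq_norm_sq (𝕜 := ℂ) ((((Submodule.orthogonalProjectionOnto V).comp Z.subtypeL)) z)
  simp only [RCLike.re_to_complex] at this
  simpa using this

lemma inner_Pj (V : Submodule ℂ H) (x : H) :
    (inner ℂ x (Pj V x) : ℂ).re = ‖((Submodule.orthogonalProjectionOnto V x : V) : H)‖ ^ 2 := by
  have h0 : (inner ℂ (x - ((Submodule.orthogonalProjectionOnto V x : V) : H)) ((Submodule.orthogonalProjectionOnto V x : V) : H) : ℂ) = 0 :=
    V.starProjection_inner_eq_zero x _ (Submodule.coe_mem _)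
  have h : (inner ℂ x (Pj V x) : ℂ) = inner ℂ ((Submodule.orthogonalProjectionOnto V x : V) : H) ((Submodule.orthogonalProjectionOnto V x : V) : H) := by
    rw [inner_sub_left, sub_eq_zero] at h0
    simpa [Pj] using h0
  rw [h]
  have := inner_self_eq_norm_sq (𝕜 := ℂ) (((Submodule.orthogonalProjectionOnto V x : V) : H))
  simpa using this

lemma hkey (Z V : Submodule ℂ H) (μ : ℝ) (hμ : 0 < μ) (hover : μ ≤ ovl V Z) (z : Z) :
    μ * ‖z‖ ^ 2 ≤ (inner ℂ z (((Mmap V Z).comp (adjoint (Mmap V Z))) z) : ℂ).re := by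
  rcases eq_or_ne z 0 with rfl | hz
  · simp
  · have hZ : Z ≠ ⊥ := by
      rintro rfl
      exact hz (Subsingleton.elim _ _)
    have hz' : (z : H) ≠ 0 := by
      simpa using hz
    have hnz : ‖(z : H)‖ ≠ 0 := norm_ne_zero_iff.2 hz'
    set S := {x : ℝ | ∃ w ∈ Z, ‖w‖ = 1 ∧ x = ((inner ℂ w (Pj V w) : ℂ)).re} with hS
    have hbdd : BddBelow S := by
      refine ⟨0, ?_⟩
      rintro x ⟨w, hw, hn, rfl⟩
      rw [inner_Pj]
      positivity
    set u : H := ((‖(z : H)‖⁻¹ : ℝ) : ℂ) • (z : H) with hu_def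
    have hu : ‖u‖ = 1 := by
      rw [hu_def, norm_smul]
      simp [hnz]
    have hmem : ((inner ℂ u (Pj V u) : ℂ)).re ∈ S := ⟨u, Z.smul_mem _ z.2, hu, rfl⟩
    have h1 : μ ≤ ((inner ℂ u (Pj V u) : ℂ)).re := by
      have : ovl V Z = sInf S := by rw [ovl, if_neg hZ]
      exact le_trans (this ▸ hover) (csInf_le hbdd hmem)
    rw [inner_Pj] at h1
    have hproj : ((Submodule.orthogonalProjectionOnto V u : V) : H)
        = ((‖(z : H)‖⁻¹ : ℝ) : ℂ) • ((Submodule.orthogonalProjectionOnto V (z : H) : V) : H) := by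
      rw [hu_def, map_smul]
      simp
    rw [hproj, norm_smul] at h1
    rw [inner_T]
    have hzz : ‖z‖ = ‖(z : H)‖ := rfl
    have hpos : (0:ℝ) < ‖(z : H)‖ := lt_of_le_of_ne (norm_nonneg _) (Ne.symm hnz)
    rw [hzz]
    have h2 : μ ≤ (‖(z : H)‖⁻¹) ^ 2 * ‖((Submodule.orthogonalProjectionOnto V (z : H) : V) : H)‖ ^ 2 := by
      calc μ ≤ (‖((‖(z : H)‖⁻¹ : ℝ) : ℂ)‖ * ‖((Submodule.orthogonalProjectionOnto V (z : H) : V) : H)‖) ^ 2 := h1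
        _ = (‖(z : H)‖⁻¹) ^ 2 * ‖((Submodule.orthogonalProjectionOnto V (z : H) : V) : H)‖ ^ 2 := by
          rw [Complex.norm_real, Real.norm_eq_abs, abs_of_nonneg (by positivity)]; ring
    have h3 := mul_le_mul_of_nonneg_right h2 (le_of_lt (by positivity : (0:ℝ) < ‖(z : H)‖ ^ 2))
    calc μ * ‖(z : H)‖ ^ 2 ≤ (‖(z : H)‖⁻¹) ^ 2 * ‖((Submodule.orthogonalProjectionOnto V (z : H) : V) : H)‖ ^ 2 * ‖(z : H)‖ ^ 2 := h3
      _ = ‖((Submodule.orthogonalProjectionOnto V (z : H) : V) : H)‖ ^ 2 := by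
        field_simp

/-- Lifting lemma: if `V` is `μ`-overlapping onto `Z` with `μ > 0`, the lifting
operator `L = M†(MM†)⁻¹` is well defined (`MM†` is invertible), satisfies
`P_Z (L z) = z` for all `z ∈ Z`, and `‖L‖ ≤ μ^{-1/2}`. -/
theorem lifting_lemma (Z V : Submodule ℂ H) (μ : ℝ) (hμ : 0 < μ) (hover : μ ≤ ovl V Z) :
    IsUnit ((Mmap V Z).comp (adjoint (Mmap V Z))) ∧
    (∀ z : Z, Pj Z ((liftOp V Z z : H)) = (z : H)) ∧
    ‖liftOp V Z‖ ≤ (Real.sqrt μ)⁻¹ := by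
  set T := (Mmap V Z).comp (adjoint (Mmap V Z)) with hT
  -- injectivity
  have hinj : Function.Injective T := by
    intro a b hab
    have h0 : T (a - b) = 0 := by rw [map_sub, hab, sub_self]
    have h1 := hkey Z V μ hμ hover (a - b)
    rw [← hT, h0] at h1
    simp only [inner_zero_right, Complex.zero_re] at h1
    have h1' : μ * ‖a - b‖ ^ 2 ≤ μ * 0 := by simpa using h1
    have hs : ‖a - b‖ ^ 2 ≤ 0 := le_of_mul_le_mul_left h1' hμ
    have : ‖a - b‖ = 0 := by
      have := sq_eq_zero_iff.mp (le_antisymm hs (sq_nonneg _))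
      exact this
    rwa [norm_eq_zero, sub_eq_zero] at this
  have hsurj : Function.Surjective T :=
    (LinearMap.injective_iff_surjective (f := (T : Z →ₗ[ℂ] Z))).1 hinj
  let e : Z ≃ₗ[ℂ] Z := LinearEquiv.ofBijective (T : Z →ₗ[ℂ] Z) ⟨hinj, hsurj⟩
  let e' : Z ≃L[ℂ] Z := e.toContinuousLinearEquiv
  have hUnit : IsUnit T := ⟨e'.toUnit, by ext x; rfl⟩
  have hTinv : T.comp (Ring.inverse T) = ContinuousLinearMap.id ℂ Z := by
    have := Ring.mul_inverse_cancel T hUnit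
    rwa [ContinuousLinearMap.mul_def, ContinuousLinearMap.one_def] at this
  have hTinv' : ∀ z : Z, T (Ring.inverse T z) = z := by
    intro z
    have := congrArg (fun f => f z) hTinv
    simpa using this
  refine ⟨hUnit, ?_, ?_⟩
  · intro z
    have h2 : Mmap V Z (liftOp V Z z) = z := by
      have hc : (Mmap V Z).comp (liftOp V Z) = ContinuousLinearMap.id ℂ Z := by
        rw [liftOp, ← ContinuousLinearMap.comp_assoc, ← hT]
        exact hTinv
      have := congrArg (fun f => f z) hc
      simpa using this
    show Z.subtypeL (Submodule.orthogonalProjectionOnto Z ((liftOp V Z z : V) : H)) = (z : H)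
    have : Submodule.orthogonalProjectionOnto Z ((liftOp V Z z : V) : H) = z := h2
    rw [this]
    rfl
  · refine ContinuousLinearMap.opNorm_le_bound _ (by positivity) fun z => ?_
    set w : Z := Ring.inverse T z with hw
    have hTw : T w = z := hTinv' z
    have hLz : liftOp V Z z = adjoint (Mmap V Z) w := rfl
    have h3 : ‖liftOp V Z z‖ ^ 2 = (inner ℂ w z : ℂ).re := by
      rw [hLz, ← inner_self_eq_norm_sq (𝕜 := ℂ)]
      have : (inner ℂ (adjoint (Mmap V Z) w) (adjoint (Mmap V Z) w) : ℂ)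
          = inner ℂ w (T w) := by
        rw [ContinuousLinearMap.adjoint_inner_left, hT]
        rfl
      rw [RCLike.re_to_complex] at *
      rw [this, hTw]
    have h4 : μ * ‖w‖ ^ 2 ≤ (inner ℂ w z : ℂ).re := by
      have := hkey Z V μ hμ hover w
      rwa [← hT, hTw] at this
    have h5 : (inner ℂ w z : ℂ).re ≤ ‖w‖ * ‖z‖ := by
      calc (inner ℂ w z : ℂ).re ≤ ‖(inner ℂ w z : ℂ)‖ := Complex.re_le_norm _
        _ ≤ ‖w‖ * ‖z‖ := norm_inner_le_norm w z
    have hw2 : ‖w‖ ≤ μ⁻¹ * ‖z‖ := by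
      rcases eq_or_lt_of_le (norm_nonneg w) with h0 | h0
      · rw [← h0]; positivity
      · have key : (μ * ‖w‖) * ‖w‖ ≤ ‖z‖ * ‖w‖ := by
          calc (μ * ‖w‖) * ‖w‖ = μ * ‖w‖ ^ 2 := by ring
            _ ≤ ‖w‖ * ‖z‖ := h4.trans h5
            _ = ‖z‖ * ‖w‖ := by ring
        have hμw : μ * ‖w‖ ≤ ‖z‖ := le_of_mul_le_mul_right key h0
        calc ‖w‖ = μ⁻¹ * (μ * ‖w‖) := by field_simp
          _ ≤ μ⁻¹ * ‖z‖ := mul_le_mul_of_nonneg_left hμw (by positivity)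
    have h6 : ‖liftOp V Z z‖ ^ 2 ≤ μ⁻¹ * ‖z‖ ^ 2 := by
      calc ‖liftOp V Z z‖ ^ 2 = (inner ℂ w z : ℂ).re := h3
        _ ≤ ‖w‖ * ‖z‖ := h5
        _ ≤ (μ⁻¹ * ‖z‖) * ‖z‖ := mul_le_mul_of_nonneg_right hw2 (norm_nonneg _)
        _ = μ⁻¹ * ‖z‖ ^ 2 := by ring
    have hsq : ((Real.sqrt μ)⁻¹ * ‖z‖) ^ 2 = μ⁻¹ * ‖z‖ ^ 2 := by
      rw [mul_pow, ← Real.sqrt_inv, Real.sq_sqrt (by positivity)]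
    refine le_of_pow_le_pow_left₀ (n := 2) two_ne_zero (by positivity) ?_
    rw [hsq]
    exact h6
end
end
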